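/- Let z = (h, φ, u, v, p, q, r, s) : ℝ² → ℝ⁸ be smooth and satisfy the multi-symplectic system M z_t + K z_x = ∇S(z) with M = e1⊗e2 − e2⊗e1 + (1/3)(e1⊗e5 − e5⊗e1), K = (1/3)(e1⊗e7 − e7⊗e1) − e2⊗e6 + e6⊗e2, and S(z) = ((1/6)v² − (1/2)u² − (1/3)s u v)h − (1/2)g h² + (1/3)p(u s − v) + q(u + (1/3)s v) − (1/3)r s. Then the eight component equations (Sh)–(Ss) of the paper hold; in particular h_t + q_x = 0 and h_x = s. -/

import Mathlib

open Matrix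

/-- Standard basis vectors of ℝ⁸. -/
noncomputable def e (i : Fin 8) : Fin 8 → ℝ := Pi.single i 1

/-- Outer product a⊗b. -/
noncomputable def outer (a b : Fin 8 → ℝ) : Matrix (Fin 8) (Fin 8) ℝ :=
  Matrix.vecMulVec a b

/-- M = e1⊗e2 − e2⊗e1 + (1/3)(e1⊗e5 − e5⊗e1). -/
noncomputable def Mmat : Matrix (Fin 8) (Fin 8) ℝ :=
  outer (e 0) (e 1) - outer (e 1) (e 0)
    + (1/3 : ℝ) • (outer (e 0) (e 4) - outer (e 4) (e 0))

/-- K = (1/3)(e1⊗e7 − e7⊗e1) − e2⊗e6 + e6⊗e2. -/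
noncomputable def Kmat : Matrix (Fin 8) (Fin 8) ℝ :=
  (1/3 : ℝ) • (outer (e 0) (e 6) - outer (e 6) (e 0))
    - outer (e 1) (e 5) + outer (e 5) (e 1)

/-- The Hamiltonian S of the multi-symplectic Serre system, with
    w = (h, φ, u, v, p, q, r, s). -/
noncomputable def Sfun (g : ℝ) (w : Fin 8 → ℝ) : ℝ :=
  ((1/6 : ℝ) * (w 3)^2 - (1/2 : ℝ) * (w 2)^2
      - (1/3 : ℝ) * w 7 * w 2 * w 3) * w 0
    - (1/2 : ℝ) * g * (w 0)^2
    + (1/3 : ℝ) * w 4 * (w 2 * w 7 - w 3)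
    + w 5 * (w 2 + (1/3 : ℝ) * w 7 * w 3)
    - (1/3 : ℝ) * w 6 * w 7

/-- Partial derivatives of scalar functions of (x,t). -/
noncomputable def px (f : ℝ → ℝ → ℝ) : ℝ → ℝ → ℝ := fun x t => deriv (fun x' => f x' t) x
noncomputable def pt (f : ℝ → ℝ → ℝ) : ℝ → ℝ → ℝ := fun x t => deriv (fun t' => f x t') t

/-- Partial derivatives of vector-valued functions of (x,t). -/
noncomputable def pxv (z : ℝ → ℝ → (Fin 8 → ℝ)) : ℝ → ℝ → (Fin 8 → ℝ) :=
  fun x t => deriv (fun x' => z x' t) x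
noncomputable def ptv (z : ℝ → ℝ → (Fin 8 → ℝ)) : ℝ → ℝ → (Fin 8 → ℝ) :=
  fun x t => deriv (fun t' => z x t') t


section AuxSerre

noncomputable def P8 (j : Fin 8) : (Fin 8 → ℝ) →L[ℝ] ℝ := ContinuousLinearMap.proj j

lemma hP8 (j : Fin 8) (w : Fin 8 → ℝ) :
    HasFDerivAt (fun w : Fin 8 → ℝ => w j) (P8 j) w := (P8 j).hasFDerivAt

noncomputable def grad (g : ℝ) (w : Fin 8 → ℝ) : Fin 8 → ℝ := fun i =>
  if i = 0 then (1/6 : ℝ)*(w 3)^2 - (1/2 : ℝ)*(w 2)^2 - (1/3 : ℝ)*w 7*w 2*w 3 - g*w 0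
  else if i = 1 then 0
  else if i = 2 then -(w 2 + (1/3 : ℝ)*w 7*w 3)*w 0 + (1/3 : ℝ)*w 4*w 7 + w 5
  else if i = 3 then ((1/3 : ℝ)*w 3 - (1/3 : ℝ)*w 7*w 2)*w 0 - (1/3 : ℝ)*w 4 + (1/3 : ℝ)*w 5*w 7
  else if i = 4 then (1/3 : ℝ)*(w 2*w 7 - w 3)
  else if i = 5 then w 2 + (1/3 : ℝ)*w 7*w 3
  else if i = 6 then -(1/3 : ℝ)*w 7
  else -(1/3 : ℝ)*w 2*w 3*w 0 + (1/3 : ℝ)*w 4*w 2 + (1/3 : ℝ)*w 5*w 3 - (1/3 : ℝ)*w 6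

lemma sfun_key (g : ℝ) (w : Fin 8 → ℝ) (i : Fin 8) :
    fderiv ℝ (Sfun g) w (Pi.single i 1) = grad g w i := by
  have h0 := hP8 0 w; have h2 := hP8 2 w; have h3 := hP8 3 w
  have h4 := hP8 4 w; have h5 := hP8 5 w; have h6 := hP8 6 w; have h7 := hP8 7 w
  have H := ((((((((h3.mul h3).const_mul ((1:ℝ)/6)).sub ((h2.mul h2).const_mul ((1:ℝ)/2))).sub
      (((h7.const_mul ((1:ℝ)/3)).mul h2).mul h3)).mul h0).sub
      (((h0.mul h0).const_mul g).const_mul ((1:ℝ)/2))).add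
      ((h4.const_mul ((1:ℝ)/3)).mul ((h2.mul h7).sub h3))).add
      (h5.mul (h2.add ((h7.const_mul ((1:ℝ)/3)).mul h3)))).sub
      ((h6.const_mul ((1:ℝ)/3)).mul h7)
  have hfd : HasFDerivAt (Sfun g) _ w :=
    H.congr_of_eventuallyEq (Filter.Eventually.of_forall fun y => by simp [Sfun]; ring)
  rw [hfd.fderiv]
  simp only [ContinuousLinearMap.add_apply, ContinuousLinearMap.sub_apply,
    ContinuousLinearMap.smul_apply, P8, ContinuousLinearMap.proj_apply, smul_eq_mul]
  fin_cases i <;> simp [grad, Pi.single_apply] <;> ring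

lemma Mmul (y : Fin 8 → ℝ) (i : Fin 8) :
    Mmat.mulVec y i = (if i = 0 then y 1 + (1/3 : ℝ) * y 4
      else if i = 1 then -y 0 else if i = 4 then -(1/3 : ℝ)*y 0 else 0) := by
  fin_cases i <;>
    simp only [Mmat, outer, Matrix.mulVec, dotProduct, Fin.sum_univ_eight, Matrix.add_apply,
      Matrix.sub_apply, Matrix.smul_apply, Matrix.vecMulVec_apply, e, Pi.single_apply,
      smul_eq_mul] <;> simp

lemma Kmul (y : Fin 8 → ℝ) (i : Fin 8) :
    Kmat.mulVec y i = (if i = 0 then (1/3 : ℝ) * y 6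
      else if i = 1 then -y 5 else if i = 5 then y 1
      else if i = 6 then -(1/3 : ℝ)*y 0 else 0) := by
  fin_cases i <;>
    simp only [Kmat, outer, Matrix.mulVec, dotProduct, Fin.sum_univ_eight, Matrix.add_apply,
      Matrix.sub_apply, Matrix.smul_apply, Matrix.vecMulVec_apply, e, Pi.single_apply,
      smul_eq_mul] <;> simp

lemma ptv_apply (z : ℝ → ℝ → (Fin 8 → ℝ))
    (hz : ContDiff ℝ (⊤ : ℕ∞) (fun w : ℝ × ℝ => z w.1 w.2)) (x t : ℝ) (i : Fin 8) :
    ptv z x t i = pt (fun a b => z a b i) x t := by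
  have hdi : DifferentiableAt ℝ (fun t' => z x t') t := by
    have h2 : Differentiable ℝ fun t' : ℝ => (x, t') :=
      (differentiable_const x).prodMk differentiable_id
    exact ((hz.differentiable (by simp)).comp h2).differentiableAt
  have h := hdi.hasDerivAt
  rw [hasDerivAt_pi] at h
  exact ((h i).deriv).symm

lemma pxv_apply (z : ℝ → ℝ → (Fin 8 → ℝ))
    (hz : ContDiff ℝ (⊤ : ℕ∞) (fun w : ℝ × ℝ => z w.1 w.2)) (x t : ℝ) (i : Fin 8) :
    pxv z x t i = px (fun a b => z a b i) x t := by
  have hdi : DifferentiableAt ℝ (fun x' => z x' t) x := by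
    have h2 : Differentiable ℝ fun x' : ℝ => (x', t) :=
      differentiable_id.prodMk (differentiable_const t)
    exact ((hz.differentiable (by simp)).comp h2).differentiableAt
  have h := hdi.hasDerivAt
  rw [hasDerivAt_pi] at h
  exact ((h i).deriv).symm

end AuxSerre

/-- The multi-symplectic system M z_t + K z_x = ∇S(z) for
    z = (h, φ, u, v, p, q, r, s) is equivalent to the eight component
    equations (Sh)–(Ss) of the Serre system. -/
theorem serre_ms_component_equations
    (g : ℝ) (hg : 0 < g)
    (z : ℝ → ℝ → (Fin 8 → ℝ))
    (hz : ContDiff ℝ (⊤ : ℕ∞) (fun w : ℝ × ℝ => z w.1 w.2))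
    (hms : ∀ x t i,
      (Mmat.mulVec (ptv z x t) + Kmat.mulVec (pxv z x t)) i
        = fderiv ℝ (Sfun g) (z x t) (Pi.single i 1)) :
    ∀ x t,
      -- abbreviations: component functions
      (let h : ℝ → ℝ → ℝ := fun x t => z x t 0
       let φ : ℝ → ℝ → ℝ := fun x t => z x t 1
       let u : ℝ → ℝ → ℝ := fun x t => z x t 2
       let v : ℝ → ℝ → ℝ := fun x t => z x t 3
       let p : ℝ → ℝ → ℝ := fun x t => z x t 4
       let q : ℝ → ℝ → ℝ := fun x t => z x t 5
       let r : ℝ → ℝ → ℝ := fun x t => z x t 6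
       let s : ℝ → ℝ → ℝ := fun x t => z x t 7
       (pt φ x t + (1/3 : ℝ) * pt p x t + (1/3 : ℝ) * px r x t
          = (1/6 : ℝ) * (v x t)^2 - (1/2 : ℝ) * (u x t)^2
            - (1/3 : ℝ) * s x t * u x t * v x t - g * h x t) ∧
       (-pt h x t - px q x t = 0) ∧
       ((0 : ℝ) = q x t - h x t * u x t
          + (1/3 : ℝ) * s x t * (p x t - h x t * v x t)) ∧
       ((0 : ℝ) = (1/3 : ℝ) * (h x t * v x t - p x t)
          + (1/3 : ℝ) * s x t * (q x t - h x t * u x t)) ∧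
       (-(1/3 : ℝ) * pt h x t = (1/3 : ℝ) * (s x t * u x t - v x t)) ∧
       (px φ x t = u x t + (1/3 : ℝ) * s x t * v x t) ∧
       (-(1/3 : ℝ) * px h x t = -(1/3 : ℝ) * s x t) ∧
       ((0 : ℝ) = (1/3 : ℝ) * (p x t * u x t + q x t * v x t - r x t
          - h x t * u x t * v x t))) := by
  intro x t
  have E : ∀ i : Fin 8, _ := fun i => hms x t i
  simp only [Pi.add_apply, Mmul, Kmul, sfun_key, ptv_apply z hz, pxv_apply z hz, grad] at E
  have E0 := E 0; have E1 := E 1; have E2 := E 2; have E3 := E 3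
  have E4 := E 4; have E5 := E 5; have E6 := E 6; have E7 := E 7
  simp (config := { decide := true }) only [] at E2 E3 E4 E5 E6 E7
  norm_num at E0 E1 E2 E3 E4 E5 E6 E7
  refine ⟨?_, ?_, ?_, ?_, ?_, ?_, ?_, ?_⟩
  · linear_combination E0
  · linear_combination E1
  · linear_combination E2
  · linear_combination E3
  · linear_combination E4
  · linear_combination E5
  · linear_combination (-1/3 : ℝ) * E6
  · linear_combination E7
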